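/- arXiv:1705.05775 — 2 statements merged into one kernel-verified Lean document; each statement's English description precedes it below -/
import Mathlib

section
/- Let q ≥ 1 and r ≥ q be real numbers. For every ε > 0 there exists C(ε) > 0 such that for all real numbers a, b one has | |a+b|^q − |a|^q |^{r/q} ≤ ε |a|^r + C(ε) |b|^r. -/
/-!
Write `D = ||a + b|^q - |a|^q|`. If `|b|` is small compared with `|a|`, say `|b| ≤ t |a|`, the
mean value theorem for `x ↦ x^q` on `[0, 2|a|]` gives `D ≤ q 2^(q-1) t |a|^q`, and `t` is chosen
so that this is at most `min ε 1 · |a|^q`; raising to the power `r/q ≥ 1` keeps the factor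
below `ε`.
Otherwise `|a| < |b| / t`, so both `|a + b|` and `|a|` are at most `(1 + 1/t) |b|`, whence
`D^(r/q) ≤ (1 + 1/t)^r |b|^r`.
-/

open Real Set

lemma abs_rpow_sub_rpow_le_mul {q M x y : ℝ} (hq : 1 ≤ q) (hx : x ∈ Icc 0 M)
    (hy : y ∈ Icc 0 M) :
    |x ^ q - y ^ q| ≤ q * M ^ (q - 1) * |x - y| := by
  have hderiv (z : ℝ) (_ : z ∈ Icc 0 M) :
      HasDerivWithinAt (fun x : ℝ ↦ x ^ q) (q * z ^ (q - 1)) (Icc 0 M) z :=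
    (hasDerivAt_rpow_const (Or.inr hq)).hasDerivWithinAt
  have hbound (z : ℝ) (hz : z ∈ Icc 0 M) : ‖q * z ^ (q - 1)‖ ≤ q * M ^ (q - 1) := by
    rw [Real.norm_of_nonneg (by have := rpow_nonneg hz.1 (q - 1); positivity)]
    exact mul_le_mul_of_nonneg_left (rpow_le_rpow hz.1 hz.2 (by linarith)) (by linarith)
  exact (convex_Icc 0 M).norm_image_sub_le_of_norm_hasDerivWithin_le hderiv hbound hy hx

lemma abs_rpow_sub_rpow_le_rpow {q M x y : ℝ} (hq : 0 ≤ q) (hx : x ∈ Icc 0 M)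
    (hy : y ∈ Icc 0 M) :
    |x ^ q - y ^ q| ≤ M ^ q :=
  abs_sub_le_of_nonneg_of_le (rpow_nonneg hx.1 q) (rpow_le_rpow hx.1 hx.2 hq)
    (rpow_nonneg hy.1 q) (rpow_le_rpow hy.1 hy.2 hq)

lemma rpow_div_le_rpow_of_le_rpow {D M q r : ℝ} (hD : 0 ≤ D) (hM : 0 ≤ M) (hq : 0 < q)
    (hr : 0 ≤ r) (h : D ≤ M ^ q) : D ^ (r / q) ≤ M ^ r := by
  calc D ^ (r / q) ≤ (M ^ q) ^ (r / q) := rpow_le_rpow hD h (div_nonneg hr hq.le)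
    _ = M ^ r := by rw [← rpow_mul hM, mul_div_cancel₀ r hq.ne']

lemma rpow_div_le_mul_rpow_of_le_mul_rpow {D m X q r : ℝ} (hD : 0 ≤ D) (hX : 0 ≤ X)
    (hm₀ : 0 ≤ m) (hm₁ : m ≤ 1) (hq : 0 < q) (hqr : q ≤ r) (h : D ≤ m * X ^ q) :
    D ^ (r / q) ≤ m * X ^ r := by
  have hrq : 1 ≤ r / q := (one_le_div hq).mpr hqr
  calc D ^ (r / q) ≤ (m * X ^ q) ^ (r / q) := rpow_le_rpow hD h (by linarith)
    _ = m ^ (r / q) * X ^ r := by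
      rw [mul_rpow hm₀ (rpow_nonneg hX q), ← rpow_mul hX, mul_div_cancel₀ r hq.ne']
    _ ≤ m ^ (1 : ℝ) * X ^ r :=
      mul_le_mul_of_nonneg_right (rpow_le_rpow_of_exponent_ge' hm₀ hm₁ zero_le_one hrq)
        (rpow_nonneg hX r)
    _ = m * X ^ r := by rw [rpow_one]

lemma abs_abs_add_rpow_sub_le_of_mul_le {q t a b : ℝ} (hq : 0 ≤ q) (ht : 0 < t)
    (h : t * |a| ≤ |b|) : |(|a + b| ^ q - |a| ^ q)| ≤ ((1 + 1 / t) * |b|) ^ q := by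
  have ha : |a| ≤ |b| / t := (le_div_iff₀' ht).mpr h
  have hM : (1 + 1 / t) * |b| = |b| + |b| / t := by ring
  refine abs_rpow_sub_rpow_le_rpow hq ⟨abs_nonneg _, ?_⟩ ⟨abs_nonneg _, ?_⟩
  · linarith [abs_add_le a b]
  · linarith [abs_nonneg b]

lemma abs_abs_add_rpow_sub_le_of_le_mul {q t a b : ℝ} (hq : 1 ≤ q) (ht : t ≤ 1)
    (h : |b| ≤ t * |a|) : |(|a + b| ^ q - |a| ^ q)| ≤ q * 2 ^ (q - 1) * t * |a| ^ q := by
  have hab : |a + b| ≤ 2 * |a| := by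
    nlinarith [abs_add_le a b, abs_nonneg a]
  have hdiff : |(|a + b| - |a|)| ≤ |b| := by
    simpa using abs_abs_sub_abs_le_abs_sub (a + b) a
  have hpow : |a| ^ q = |a| ^ (q - 1) * |a| := by
    rw [← rpow_add_one' (abs_nonneg a) (by linarith), sub_add_cancel]
  calc |(|a + b| ^ q - |a| ^ q)| ≤ q * (2 * |a|) ^ (q - 1) * |(|a + b| - |a|)| :=
        abs_rpow_sub_rpow_le_mul hq ⟨abs_nonneg _, hab⟩
          ⟨abs_nonneg _, by linarith [abs_nonneg a]⟩
    _ ≤ q * (2 * |a|) ^ (q - 1) * (t * |a|) := by gcongr; exact hdiff.trans h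
    _ = q * 2 ^ (q - 1) * t * |a| ^ q := by
      rw [mul_rpow zero_le_two (abs_nonneg a), hpow]; ring

/-- For `1 ≤ q ≤ r` and every `ε > 0` there is `C(ε) > 0` such that for all reals `a, b`:
`||a+b|^q - |a|^q|^{r/q} ≤ ε |a|^r + C(ε) |b|^r`. -/
theorem abs_rpow_diff_estimate (q r : ℝ) (hq : 1 ≤ q) (hr : q ≤ r) :
    ∀ ε > (0 : ℝ), ∃ C > (0 : ℝ), ∀ a b : ℝ,
      |(|a + b| ^ q - |a| ^ q)| ^ (r / q) ≤ ε * |a| ^ r + C * |b| ^ r := by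
  intro ε hε
  have hq₀ : 0 < q := by linarith
  set K := q * 2 ^ (q - 1) with hK
  have hK₁ : 1 ≤ K := one_le_mul_of_one_le_of_one_le hq (one_le_rpow one_le_two (by linarith))
  set m := min ε 1
  have hm₀ : 0 < m := lt_min hε one_pos
  set t := m / K
  have ht₀ : 0 < t := by positivity
  have ht₁ : t ≤ 1 := div_le_one_of_le₀ ((min_le_right _ _).trans hK₁) (by positivity)
  refine ⟨(1 + 1 / t) ^ r, by positivity, fun a b ↦ ?_⟩
  rcases le_or_gt (t * |a|) |b| with hb | hb
  · calc |(|a + b| ^ q - |a| ^ q)| ^ (r / q) ≤ ((1 + 1 / t) * |b|) ^ r :=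
          rpow_div_le_rpow_of_le_rpow (abs_nonneg _) (by positivity) hq₀ (by linarith)
            (abs_abs_add_rpow_sub_le_of_mul_le hq₀.le ht₀ hb)
      _ = (1 + 1 / t) ^ r * |b| ^ r := mul_rpow (by positivity) (abs_nonneg b)
      _ ≤ ε * |a| ^ r + (1 + 1 / t) ^ r * |b| ^ r := le_add_of_nonneg_left (by positivity)
  · have hKt : K * t = m := mul_div_cancel₀ m (by positivity)
    have hD : |(|a + b| ^ q - |a| ^ q)| ≤ m * |a| ^ q := by
      have h := abs_abs_add_rpow_sub_le_of_le_mul hq ht₁ hb.le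
      rwa [← hK, hKt] at h
    calc |(|a + b| ^ q - |a| ^ q)| ^ (r / q) ≤ m * |a| ^ r :=
          rpow_div_le_mul_rpow_of_le_mul_rpow (abs_nonneg _) (abs_nonneg a) hm₀.le
            (min_le_right _ _) hq₀ hr hD
      _ ≤ ε * |a| ^ r := by gcongr; exact min_le_left _ _
      _ ≤ ε * |a| ^ r + (1 + 1 / t) ^ r * |b| ^ r := le_add_of_nonneg_right (by positivity)
end

section
/- (Local Brezis–Lieb lemma, first form.) Let r ∈ (1,∞) and q ∈ [1, r]. If (w_n) is a sequence bounded in L^r(ℝ^N) that converges almost everywhere to w, then lim_{n→∞} ∫_{ℝ^N} | |w_n|^q − |w_n − w|^q − |w|^q |^{r/q} dx = 0. -/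
/-!
Write `w n = (w n - wlim) + wlim`. The elementary estimate
`| |a + b|^q - |a|^q - |b|^q |^(r/q) ≤ ε |a|^r + C_ε |b|^r`, from the mean value bound for `t ↦ t^q`
and a case split on `|b| ≤ δ |a|`, dominates the integrand by `ε |w n - wlim|^r + C_ε |wlim|^r`.
By Fatou `‖wlim‖_r ≤ sup ‖w n‖_r`, so the first term has integral `O(ε)` uniformly in `n`; what the
integrand exceeds it by is dominated by the integrable `C_ε |wlim|^r` and tends to `0` a.e., so its
integral tends to `0` by dominated convergence.
-/

open MeasureTheory Real Filter Topology ENNReal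

noncomputable section

abbrev Sp (N : ℕ) := EuclideanSpace ℝ (Fin N)

theorem rpow_sub_rpow_le_mul_rpow_mul_sub {q x y : ℝ} (hq : 1 ≤ q) (hy : 0 ≤ y) (hyx : y ≤ x) :
    x ^ q - y ^ q ≤ q * x ^ (q - 1) * (x - y) := by
  obtain rfl | hx := (hy.trans hyx).eq_or_lt
  · obtain rfl : y = 0 := le_antisymm hyx hy
    simp
  -- Bernoulli's inequality for `(y / x) ^ q = (1 + (y / x - 1)) ^ q`
  have hbern := one_add_mul_self_le_rpow_one_add
    (by linarith [div_nonneg hy hx.le] : -1 ≤ y / x - 1) hq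
  rw [add_sub_cancel, Real.div_rpow hy hx.le, le_div_iff₀ (by positivity)] at hbern
  have hxq : x ^ (q - 1) * x = x ^ q := by rw [Real.rpow_sub_one hx.ne', div_mul_cancel₀ _ hx.ne']
  calc x ^ q - y ^ q ≤ x ^ q - (1 + q * (y / x - 1)) * x ^ q := by linarith
    _ = q * (x ^ (q - 1) * x) * (1 - y / x) := by rw [hxq]; ring
    _ = q * x ^ (q - 1) * (x - y) := by field_simp

theorem abs_rpow_sub_rpow_le {q x y T : ℝ} (hq : 1 ≤ q) (hx : 0 ≤ x) (hy : 0 ≤ y)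
    (hxT : x ≤ T) (hyT : y ≤ T) : |x ^ q - y ^ q| ≤ q * T ^ (q - 1) * |x - y| := by
  wlog hyx : y ≤ x generalizing x y
  · rw [abs_sub_comm, abs_sub_comm x]
    exact this hy hx hyT hxT (le_of_not_ge hyx)
  rw [abs_of_nonneg (sub_nonneg.2 (Real.rpow_le_rpow hy hyx (by linarith))),
    abs_of_nonneg (sub_nonneg.2 hyx)]
  refine (rpow_sub_rpow_le_mul_rpow_mul_sub hq hy hyx).trans ?_
  gcongr

theorem abs_abs_add_rpow_sub_abs_rpow_le {q : ℝ} (hq : 1 ≤ q) (a b : ℝ) :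
    |(|a + b| ^ q - |a| ^ q)| ≤ q * (|a| + |b|) ^ (q - 1) * |b| := by
  refine (abs_rpow_sub_rpow_le hq (abs_nonneg _) (abs_nonneg a) (abs_add_le a b)
    (le_add_of_nonneg_right (abs_nonneg b))).trans ?_
  have : 0 ≤ q * (|a| + |b|) ^ (q - 1) := by positivity
  exact mul_le_mul_of_nonneg_left (by simpa using abs_abs_sub_abs_le_abs_sub (a + b) a) this

theorem rpow_sub_one_mul_le_rpow {q T u : ℝ} (hq : 1 ≤ q) (hu : 0 ≤ u) (huT : u ≤ T) :
    T ^ (q - 1) * u ≤ T ^ q := by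
  obtain rfl | hT := (hu.trans huT).eq_or_lt
  · rw [le_antisymm huT hu, mul_zero, Real.zero_rpow (by linarith)]
  calc T ^ (q - 1) * u ≤ T ^ (q - 1) * T := by gcongr
    _ = T ^ q := by rw [Real.rpow_sub_one hT.ne', div_mul_cancel₀ _ hT.ne']

theorem exists_abs_abs_add_rpow_sub_abs_rpow_le {q η : ℝ} (hq : 1 ≤ q) (hη : 0 < η) :
    ∃ C, 0 ≤ C ∧ ∀ a b : ℝ, |(|a + b| ^ q - |a| ^ q)| ≤ η * |a| ^ q + C * |b| ^ q := by
  obtain ⟨δ, hδ, hδ1, hδη⟩ : ∃ δ, 0 < δ ∧ δ ≤ 1 ∧ q * 2 ^ q * δ ≤ η :=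
    ⟨min 1 (η / (q * 2 ^ q)), by positivity, min_le_left _ _, by
      rw [← le_div_iff₀' (by positivity)]; exact min_le_right _ _⟩
  refine ⟨q * (1 + δ⁻¹) ^ q, by positivity, fun a b =>
    (abs_abs_add_rpow_sub_abs_rpow_le hq a b).trans ?_⟩
  have hq0 : 0 ≤ q := by linarith
  rcases le_total |b| (δ * |a|) with hb | hb
  · have hT : |a| + |b| ≤ 2 * |a| := by nlinarith [abs_nonneg a]
    calc q * (|a| + |b|) ^ (q - 1) * |b| ≤ q * δ * ((|a| + |b|) ^ (q - 1) * |a|) := by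
          rw [mul_assoc, mul_assoc, mul_left_comm δ]
          gcongr
      _ ≤ q * δ * (2 * |a|) ^ q := by
          gcongr
          exact (rpow_sub_one_mul_le_rpow hq (abs_nonneg a) (by linarith [abs_nonneg b])).trans
            (by gcongr)
      _ = q * 2 ^ q * δ * |a| ^ q := by rw [Real.mul_rpow (by norm_num) (abs_nonneg a)]; ring
      _ ≤ η * |a| ^ q := by gcongr
      _ ≤ η * |a| ^ q + q * (1 + δ⁻¹) ^ q * |b| ^ q := le_add_of_nonneg_right (by positivity)
  · have hT : |a| + |b| ≤ (1 + δ⁻¹) * |b| := by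
      have : |a| ≤ δ⁻¹ * |b| := by rw [inv_mul_eq_div, le_div_iff₀' hδ]; exact hb
      linarith
    calc q * (|a| + |b|) ^ (q - 1) * |b| ≤ q * ((1 + δ⁻¹) * |b|) ^ q := by
          rw [mul_assoc]
          gcongr
          exact (rpow_sub_one_mul_le_rpow hq (abs_nonneg b) (by linarith [abs_nonneg a])).trans
            (by gcongr)
      _ = q * (1 + δ⁻¹) ^ q * |b| ^ q := by rw [Real.mul_rpow (by positivity) (abs_nonneg b)]; ring
      _ ≤ η * |a| ^ q + q * (1 + δ⁻¹) ^ q * |b| ^ q := le_add_of_nonneg_left (by positivity)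

theorem Real.rpow_add_le_mul_rpow_add_rpow {x y p : ℝ} (hx : 0 ≤ x) (hy : 0 ≤ y) (hp : 1 ≤ p) :
    (x + y) ^ p ≤ 2 ^ (p - 1) * (x ^ p + y ^ p) := by
  lift x to NNReal using hx
  lift y to NNReal using hy
  exact_mod_cast NNReal.rpow_add_le_mul_rpow_add_rpow x y hp

theorem exists_abs_rpow_add_sub_rpow_sub_rpow_rpow_le {q r ε : ℝ} (hq : 1 ≤ q) (hqr : q ≤ r)
    (hε : 0 < ε) :
    ∃ C, ∀ a b : ℝ, |(|a + b| ^ q - |a| ^ q - |b| ^ q)| ^ (r / q) ≤ ε * |a| ^ r + C * |b| ^ r := by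
  have hq0 : 0 < q := by linarith
  set s := r / q
  have hs : 1 ≤ s := (one_le_div hq0).2 hqr
  have hrs : ∀ c t : ℝ, 0 ≤ c → (c * |t| ^ q) ^ s = c ^ s * |t| ^ r := fun c t hc => by
    rw [Real.mul_rpow hc (by positivity), ← Real.rpow_mul (abs_nonneg t), mul_div_cancel₀ _ hq0.ne']
  set η := (ε / 2 ^ (s - 1)) ^ s⁻¹
  have hη : 2 ^ (s - 1) * η ^ s = ε := by
    rw [Real.rpow_inv_rpow (by positivity) (by linarith), mul_div_cancel₀ _ (by positivity)]
  obtain ⟨C, hC0, hC⟩ := exists_abs_abs_add_rpow_sub_abs_rpow_le hq (by positivity : 0 < η)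
  refine ⟨2 ^ (s - 1) * (C + 1) ^ s, fun a b => ?_⟩
  have hlin : |(|a + b| ^ q - |a| ^ q - |b| ^ q)| ≤ η * |a| ^ q + (C + 1) * |b| ^ q := by
    have := abs_sub (|a + b| ^ q - |a| ^ q) (|b| ^ q)
    rw [abs_of_nonneg (by positivity : 0 ≤ |b| ^ q)] at this
    linarith [hC a b]
  calc |(|a + b| ^ q - |a| ^ q - |b| ^ q)| ^ s ≤ (η * |a| ^ q + (C + 1) * |b| ^ q) ^ s := by
        gcongr
    _ ≤ 2 ^ (s - 1) * ((η * |a| ^ q) ^ s + ((C + 1) * |b| ^ q) ^ s) :=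
        Real.rpow_add_le_mul_rpow_add_rpow (by positivity) (by positivity) hs
    _ = ε * |a| ^ r + 2 ^ (s - 1) * (C + 1) ^ s * |b| ^ r := by
        rw [hrs _ _ (by positivity), hrs _ _ (by positivity), ← hη]; ring

section Integral

variable {α : Type*} [MeasurableSpace α] {μ : Measure α}

theorem tendsto_integral_zero_of_forall_le_mul_add_mul {F G : ℕ → α → ℝ} {H : α → ℝ} {M : ℝ}
    (hF : ∀ n, AEStronglyMeasurable (F n) μ) (hF0 : ∀ n x, 0 ≤ F n x)
    (hG : ∀ n, Integrable (G n) μ) (hG0 : ∀ n x, 0 ≤ G n x) (hGM : ∀ n, ∫ x, G n x ∂μ ≤ M)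
    (hH : Integrable H μ) (hdom : ∀ ε > 0, ∃ C, ∀ n x, F n x ≤ ε * G n x + C * H x)
    (hlim : ∀ᵐ x ∂μ, Tendsto (fun n => F n x) atTop (𝓝 0)) :
    Tendsto (fun n => ∫ x, F n x ∂μ) atTop (𝓝 0) := by
  refine tendsto_order.2 ⟨fun a ha => Eventually.of_forall fun n =>
    ha.trans_le (integral_nonneg (hF0 n)), fun a ha => ?_⟩
  obtain ⟨ε, hε, hεM⟩ := exists_pos_mul_lt (half_pos ha) M
  obtain ⟨C, hC⟩ := hdom ε hε
  have hFint : ∀ n, Integrable (F n) μ := fun n =>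
    (((hG n).const_mul ε).add (hH.const_mul C)).mono' (hF n)
      (ae_of_all _ fun x => (Real.norm_of_nonneg (hF0 n x)).trans_le (hC n x))
  -- The part of `F n` not controlled by `ε * G n` is dominated by `C * H` and tends to `0`.
  set R := fun n x => max (F n x - ε * G n x) 0
  have hR : ∀ n x, ‖R n x‖ ≤ ‖C * H x‖ := fun n x => by
    rw [Real.norm_of_nonneg (le_max_right _ _)]
    exact max_le ((sub_le_iff_le_add'.2 (hC n x)).trans (le_abs_self _)) (norm_nonneg _)
  have hRmeas : ∀ n, AEStronglyMeasurable (R n) μ := fun n =>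
    ((hF n).sub ((hG n).aestronglyMeasurable.const_mul ε)).sup aestronglyMeasurable_const
  have hRlim : Tendsto (fun n => ∫ x, R n x ∂μ) atTop (𝓝 0) := by
    simpa using tendsto_integral_of_dominated_convergence (f := fun _ => 0) (fun x => ‖C * H x‖)
      hRmeas (hH.const_mul C).norm
      (fun n => ae_of_all _ (hR n)) (hlim.mono fun x hx =>
        tendsto_of_tendsto_of_tendsto_of_le_of_le tendsto_const_nhds hx
          (fun n => le_max_right _ _) fun n =>
            max_le (sub_le_self _ (mul_nonneg hε.le (hG0 n x))) (hF0 n x))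
  filter_upwards [hRlim.eventually (gt_mem_nhds (half_pos ha))] with n hn
  have hRint : Integrable (R n) μ := (hH.const_mul C).norm.mono' (hRmeas n) (ae_of_all _ (hR n))
  calc ∫ x, F n x ∂μ ≤ ∫ x, (R n x + ε * G n x) ∂μ :=
        integral_mono (hFint n) (hRint.add ((hG n).const_mul ε)) fun x =>
          sub_le_iff_le_add.1 (le_max_left _ _)
    _ = ∫ x, R n x ∂μ + ε * ∫ x, G n x ∂μ := by
        rw [integral_add hRint ((hG n).const_mul ε), integral_const_mul]
    _ < a / 2 + M * ε := by nlinarith [hGM n]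
    _ < a := by linarith

theorem integrable_abs_rpow_of_eLpNorm_le {f : α → ℝ} {r : ℝ} (hr : 0 < r) {C : ℝ≥0∞}
    (hC : C ≠ ⊤) (hf : AEStronglyMeasurable f μ) (hfC : eLpNorm f (ENNReal.ofReal r) μ ≤ C) :
    Integrable (fun x => |f x| ^ r) μ := by
  have hfr : MemLp f (ENNReal.ofReal r) μ := ⟨hf, hfC.trans_lt hC.lt_top⟩
  simpa [ENNReal.toReal_ofReal hr.le] using hfr.integrable_norm_rpow (by simpa using hr) ofReal_ne_top

theorem integral_abs_rpow_le_of_eLpNorm_le {f : α → ℝ} {r : ℝ} (hr : 0 < r) {C : ℝ≥0∞}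
    (hC : C ≠ ⊤) (hf : AEStronglyMeasurable f μ) (hfC : eLpNorm f (ENNReal.ofReal r) μ ≤ C) :
    ∫ x, |f x| ^ r ∂μ ≤ C.toReal ^ r := by
  have hlp := lpNorm_eq_integral_norm_rpow_toReal (by simpa using hr) ofReal_ne_top hf
  rw [← toReal_eLpNorm hf, ENNReal.toReal_ofReal hr.le] at hlp
  have hI : 0 ≤ ∫ x, |f x| ^ r ∂μ := integral_nonneg fun x => by positivity
  calc ∫ x, |f x| ^ r ∂μ = ((∫ x, |f x| ^ r ∂μ) ^ r⁻¹) ^ r := (Real.rpow_inv_rpow hI hr.ne').symm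
    _ ≤ C.toReal ^ r := by
        gcongr
        simpa [hlp] using ENNReal.toReal_mono hC hfC

end Integral

theorem tendsto_abs_abs_rpow_sub_abs_sub_rpow_sub_abs_rpow_rpow {ι : Type*} {l : Filter ι}
    {q s : ℝ} (hq : 0 < q) (hs : 0 < s) {u : ι → ℝ} {v : ℝ} (hu : Tendsto u l (𝓝 v)) :
    Tendsto (fun n => |(|u n| ^ q - |u n - v| ^ q - |v| ^ q)| ^ s) l (𝓝 0) := by
  have hcont : Continuous fun t => |(|t| ^ q - |t - v| ^ q - |v| ^ q)| ^ s := by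
    fun_prop (disch := positivity)
  simpa [Function.comp_def, Real.zero_rpow hq.ne', Real.zero_rpow hs.ne'] using
    (hcont.tendsto v).comp hu

theorem local_brezis_lieb_first_general
    (N : ℕ) (r q : ℝ) (hr1 : 1 < r) (hq1 : 1 ≤ q) (hqr : q ≤ r)
    (w : ℕ → Sp N → ℝ) (wlim : Sp N → ℝ)
    (hmeas : ∀ n, AEStronglyMeasurable (w n) (volume : Measure (Sp N)))
    (hbdd : ∃ C : ℝ≥0∞, C < ⊤ ∧ ∀ n, eLpNorm (w n) (ENNReal.ofReal r) volume ≤ C)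
    (hae : ∀ᵐ x ∂(volume : Measure (Sp N)), Tendsto (fun n => w n x) atTop (nhds (wlim x))) :
    Tendsto
      (fun n => ∫ x, |(|w n x| ^ q - |w n x - wlim x| ^ q - |wlim x| ^ q)| ^ (r / q))
      atTop (nhds 0) := by
  obtain ⟨C, hC, hwC⟩ := hbdd
  have hr0 : 0 < r := by linarith
  have hwlim : AEStronglyMeasurable wlim volume :=
    aestronglyMeasurable_of_tendsto_ae atTop hmeas hae
  have hwlimC : eLpNorm wlim (ENNReal.ofReal r) volume ≤ C :=
    Lp.eLpNorm_le_of_ae_tendsto (Eventually.of_forall hwC) hmeas hae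
  have hdiffC : ∀ n, eLpNorm (fun x => w n x - wlim x) (ENNReal.ofReal r) volume ≤ C + C :=
    fun n => (eLpNorm_sub_le (hmeas n) hwlim (ENNReal.one_le_ofReal.2 hr1.le)).trans
      (add_le_add (hwC n) hwlimC)
  have hCC : C + C ≠ ⊤ := (ENNReal.add_lt_top.2 ⟨hC, hC⟩).ne
  have hF : ∀ n, AEStronglyMeasurable
      (fun x => |(|w n x| ^ q - |w n x - wlim x| ^ q - |wlim x| ^ q)| ^ (r / q)) volume :=
    fun n => by have := hmeas n; fun_prop (disch := positivity)
  have hG : ∀ n, Integrable (fun x => |w n x - wlim x| ^ r) volume := fun n =>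
    integrable_abs_rpow_of_eLpNorm_le hr0 hCC ((hmeas n).sub hwlim) (hdiffC n)
  have hGM : ∀ n, ∫ x, |w n x - wlim x| ^ r ≤ (C + C).toReal ^ r := fun n =>
    integral_abs_rpow_le_of_eLpNorm_le hr0 hCC ((hmeas n).sub hwlim) (hdiffC n)
  have hH : Integrable (fun x => |wlim x| ^ r) volume :=
    integrable_abs_rpow_of_eLpNorm_le hr0 hC.ne hwlim hwlimC
  refine tendsto_integral_zero_of_forall_le_mul_add_mul hF (fun n x => by positivity) hG
    (fun n x => by positivity) hGM hH (fun ε hε => ?_) (hae.mono fun x hx =>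
      tendsto_abs_abs_rpow_sub_abs_sub_rpow_sub_abs_rpow_rpow (by positivity) (by positivity) hx)
  obtain ⟨K, hK⟩ := exists_abs_rpow_add_sub_rpow_sub_rpow_rpow_le hq1 hqr hε
  exact ⟨K, fun n x => by simpa using hK (w n x - wlim x) (wlim x)⟩

/-- Local Brezis–Lieb lemma, first form. -/
theorem local_brezis_lieb_first
    (N : ℕ) (hN : 1 ≤ N) (r q : ℝ) (hr1 : 1 < r) (hq1 : 1 ≤ q) (hqr : q ≤ r)
    (w : ℕ → Sp N → ℝ) (wlim : Sp N → ℝ)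
    (hmeas : ∀ n, AEStronglyMeasurable (w n) (volume : Measure (Sp N)))
    (hbdd : ∃ C : ℝ≥0∞, C < ⊤ ∧ ∀ n, eLpNorm (w n) (ENNReal.ofReal r) volume ≤ C)
    (hae : ∀ᵐ x ∂(volume : Measure (Sp N)), Tendsto (fun n => w n x) atTop (nhds (wlim x))) :
    Tendsto
      (fun n => ∫ x, |(|w n x| ^ q - |w n x - wlim x| ^ q - |wlim x| ^ q)| ^ (r / q))
      atTop (nhds 0) :=
  local_brezis_lieb_first_general N r q hr1 hq1 hqr w wlim hmeas hbdd hae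
end
end
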